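/- In the N-player public goods game with tax contract parameter θ ∈ [0,1.2], where each player i who invests a_i pays a tax θ·(1−a_i) distributed evenly among the other N−1 players, if θ > 1 − 1.2/N then investing a_i = 1 strictly dominates every a_i < 1 for each player in the contract-modified game. -/

import Mathlib

open Finset

/-- Contract-modified payoff in the N-player public goods game with tax parameter θ:
each player pays a tax θ(1 - a_i), redistributed evenly among the other N-1 players. -/
noncomputable def Rtax {N : ℕ} (θ : ℝ) (i : Fin N) (a : Fin N → ℝ) : ℝ :=
  1.2 * (∑ j, a j) / N - a i - θ * (1 - a i)
    + ∑ j ∈ univ.erase i, θ * (1 - a j) / (N - 1)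

theorem Finset.sum_univ_update {ι G : Type*} [Fintype ι] [DecidableEq ι] [AddCommGroup G]
    (f : ι → G) (i : ι) (b : G) :
    ∑ j, Function.update f i b j = ∑ j, f j + (b - f i) := by
  rw [sum_update_of_mem (mem_univ i), sdiff_singleton_eq_erase, ← add_sum_erase _ f (mem_univ i)]
  abel

/-- Changing only player `i`'s own investment leaves the taxes received from the others
unchanged. -/
theorem Rtax_update_self_sub {N : ℕ} (θ : ℝ) (i : Fin N) (a : Fin N → ℝ) (x : ℝ) :
    Rtax θ i (Function.update a i x) - Rtax θ i a = (x - a i) * (1.2 / N - 1 + θ) := by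
  have htax : ∑ j ∈ univ.erase i, θ * (1 - Function.update a i x j) / (N - 1)
      = ∑ j ∈ univ.erase i, θ * (1 - a j) / (N - 1) :=
    sum_congr rfl fun j hj => by rw [Function.update_of_ne (ne_of_mem_erase hj)]
  simp only [Rtax, sum_univ_update, htax, Function.update_self]
  ring

theorem stmt_6_general {N : ℕ} (θ : ℝ)
    (hθ : 1 - 1.2 / N < θ) :
    ∀ i : Fin N, ∀ a : Fin N → ℝ, (∀ j, a j ∈ Set.Icc (0:ℝ) 1) → a i < 1 →
      Rtax θ i a < Rtax θ i (Function.update a i 1) := by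
  intro i a _ hai
  have hgain := Rtax_update_self_sub θ i a 1
  have hpos : 0 < (1 - a i) * (1.2 / N - 1 + θ) := mul_pos (by linarith) (by linarith)
  linarith

/-- If θ > 1 - 1.2/N, then investing 1 strictly dominates every smaller investment
in the tax-contract-modified public goods game. -/
theorem stmt_6 {N : ℕ} (hN : 2 ≤ N) (θ : ℝ) (hθ0 : 0 ≤ θ) (hθ1 : θ ≤ 1.2)
    (hθ : 1 - 1.2 / N < θ) :
    ∀ i : Fin N, ∀ a : Fin N → ℝ, (∀ j, a j ∈ Set.Icc (0:ℝ) 1) → a i < 1 →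
      Rtax θ i a < Rtax θ i (Function.update a i 1) :=
  stmt_6_general θ hθ
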